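/- arXiv:1305.5916 — 7 statements merged into one kernel-verified Lean document; each statement's English description precedes it below -/
import Mathlib

section
/- Let (α_n)_{n≥1} be a sequence in [0,1] and (a_n)_{n≥1}, (b_n)_{n≥1} sequences of nonnegative reals such that a_{n+1} ≤ (1 − α_{n+1})·a_n + b_n for all n ≥ 1. Assume γ : (0,∞) → ℤ₊ is a Cauchy modulus for ∑_{n≥1} b_n (i.e. for all ε > 0 and n ≥ 1, ∑_{i=γ(ε)+1}^{γ(ε)+n} b_i ≤ ε), θ : ℤ₊ → ℤ₊ is a rate of divergence for ∑_{n≥1} α_{n+1} (i.e. ∑_{k=1}^{θ(n)} α_{k+1} ≥ n for all n ≥ 1), and P > 0 is an upper bound on (a_n). Then for every ε > 0 and every n ≥ θ(γ(ε/2) + max{⌈ln(2P/ε)⌉, 1}) + 1 one has a_n ≤ ε. -/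
/-!
Unrolling the recursion from `N + 1`, where `N = γ(ε/2)`, gives
`a (N + 1 + m) ≤ (∏ (1 - α k)) * a (N + 1) + ∑ b i`, and the Cauchy modulus bounds the sum by
`ε / 2`. As `1 - x ≤ exp (-x)`, the product is at most `exp (-∑ α k)`. Cutting off the first `N`
terms of the divergent series loses at most `N`, since each term is at most `1`; so for
`n > θ (N + M)` the exponent is at least `M ≥ log (2P/ε)`, and the product term is at most
`ε / (2P) * P = ε / 2`.
-/

open Finset

theorem le_prod_mul_add_sum_of_le_mul_add {c a b : ℕ → ℝ} {N : ℕ}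
    (hc : ∀ n, N < n → c n ∈ Set.Icc (0 : ℝ) 1) (hb : ∀ n, N ≤ n → 0 ≤ b n)
    (hrec : ∀ n, N ≤ n → a (n + 1) ≤ c (n + 1) * a n + b n) (m : ℕ) :
    a (N + m) ≤ (∏ k ∈ Ioc N (N + m), c k) * a N + ∑ i ∈ Ico N (N + m), b i := by
  induction m with
  | zero => simp
  | succ m ih =>
    obtain ⟨hc0, hc1⟩ := hc (N + m + 1) (by omega)
    have hS : 0 ≤ ∑ i ∈ Ico N (N + m), b i :=
      sum_nonneg fun i hi => hb i (mem_Ico.1 hi).1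
    rw [← add_assoc, prod_Ioc_succ_top (by omega), sum_Ico_succ_top (by omega)]
    calc a (N + m + 1) ≤ c (N + m + 1) * a (N + m) + b (N + m) := hrec _ (by omega)
      _ ≤ c (N + m + 1) * ((∏ k ∈ Ioc N (N + m), c k) * a N + ∑ i ∈ Ico N (N + m), b i)
            + b (N + m) := by gcongr
      _ ≤ _ := by nlinarith

theorem prod_one_sub_le_exp_neg_sum {ι : Type*} (s : Finset ι) {f : ι → ℝ}
    (hf : ∀ i ∈ s, f i ≤ 1) : ∏ i ∈ s, (1 - f i) ≤ Real.exp (-∑ i ∈ s, f i) := by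
  rw [← sum_neg_distrib, Real.exp_sum]
  exact prod_le_prod (fun i hi => sub_nonneg.2 (hf i hi)) fun i _ => Real.one_sub_le_exp_neg _

theorem prod_one_sub_le_inv_of_log_le_sum {ι : Type*} (s : Finset ι) {f : ι → ℝ}
    (hf : ∀ i ∈ s, f i ≤ 1) {x : ℝ} (hx : 0 < x) (h : Real.log x ≤ ∑ i ∈ s, f i) :
    ∏ i ∈ s, (1 - f i) ≤ x⁻¹ := by
  refine (prod_one_sub_le_exp_neg_sum s hf).trans ?_
  rw [Real.exp_neg]
  exact inv_anti₀ hx ((Real.log_le_iff_le_exp hx).1 h)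

theorem le_sum_Ioc_of_add_le_sum_Ioc {f : ℕ → ℝ} {a b c : ℕ} {x : ℝ} (hab : a ≤ b) (hbc : b ≤ c)
    (hf : ∀ i ∈ Ioc a b, f i ≤ 1) (h : ((b - a : ℕ) : ℝ) + x ≤ ∑ i ∈ Ioc a c, f i) :
    x ≤ ∑ i ∈ Ioc b c, f i := by
  have hhead : ∑ i ∈ Ioc a b, f i ≤ ((b - a : ℕ) : ℝ) := by
    simpa using sum_le_card_nsmul _ _ _ hf
  rw [← sum_Ioc_consecutive f hab hbc] at h
  linarith

theorem sum_Icc_one_comp_add_one (α : ℕ → ℝ) (T : ℕ) :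
    ∑ k ∈ Icc 1 T, α (k + 1) = ∑ k ∈ Ioc 1 (T + 1), α k := by
  rw [← Icc_add_one_left_eq_Ioc, ← map_add_right_Icc, sum_map]
  rfl

section ShiftedSum

variable {α : ℕ → ℝ} {K N M T n : ℕ}

theorem le_of_le_sum_Icc_one_comp_add_one (hα : ∀ k, 1 ≤ k → α k ≤ 1)
    (h : (K : ℝ) ≤ ∑ k ∈ Icc 1 T, α (k + 1)) : K ≤ T := by
  have hsum : ∑ k ∈ Icc 1 T, α (k + 1) ≤ T := by
    simpa using sum_le_card_nsmul (Icc 1 T) _ _ fun k _ => hα (k + 1) (by omega)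
  exact_mod_cast h.trans hsum

theorem le_sum_Ioc_of_add_le_sum_Icc_one_comp_add_one (hα : ∀ k, 1 ≤ k → α k ∈ Set.Icc 0 1)
    (h : ((N + M : ℕ) : ℝ) ≤ ∑ k ∈ Icc 1 T, α (k + 1)) (hn : T + 1 ≤ n) :
    (M : ℝ) ≤ ∑ k ∈ Ioc (N + 1) n, α k := by
  have hNT : N + M ≤ T := le_of_le_sum_Icc_one_comp_add_one (fun k hk => (hα k hk).2) h
  rw [sum_Icc_one_comp_add_one] at h
  have hα1 : ∀ k ∈ Ioc 1 (N + 1), α k ≤ 1 := fun k hk => (hα k (mem_Ioc.1 hk).1.le).2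
  calc (M : ℝ) ≤ ∑ k ∈ Ioc (N + 1) (T + 1), α k :=
        le_sum_Ioc_of_add_le_sum_Ioc (by omega) (by omega) hα1 (by push_cast at h ⊢; simpa)
    _ ≤ ∑ k ∈ Ioc (N + 1) n, α k :=
        sum_le_sum_of_subset_of_nonneg (Ioc_subset_Ioc_right hn)
          fun k hk _ => (hα k (by linarith [(mem_Ioc.1 hk).1])).1

end ShiftedSum

theorem rate_of_convergence_main_lemma_general
    (α a b : ℕ → ℝ)
    (hα : ∀ n, 1 ≤ n → α n ∈ Set.Icc (0 : ℝ) 1)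
    (hb : ∀ n, 1 ≤ n → 0 ≤ b n)
    (hrec : ∀ n, 1 ≤ n → a (n + 1) ≤ (1 - α (n + 1)) * a n + b n)
    (γ : ℝ → ℕ)
    (hγmod : ∀ ε : ℝ, 0 < ε → ∀ n : ℕ, 1 ≤ n →
      (∑ i ∈ Finset.Icc (γ ε + 1) (γ ε + n), b i) ≤ ε)
    (θ : ℕ → ℕ)
    (hθdiv : ∀ n : ℕ, 1 ≤ n → (n : ℝ) ≤ ∑ k ∈ Finset.Icc 1 (θ n), α (k + 1))
    (P : ℝ) (hP : 0 < P) (haP : ∀ n, 1 ≤ n → a n ≤ P) :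
    ∀ ε : ℝ, 0 < ε → ∀ n : ℕ,
      θ (γ (ε / 2) + max ⌈Real.log (2 * P / ε)⌉₊ 1) + 1 ≤ n → a n ≤ ε := by
  intro ε hε n hn
  set N := γ (ε / 2)
  set M := max ⌈Real.log (2 * P / ε)⌉₊ 1
  have hdiv := hθdiv (N + M) (by omega)
  have hNMT := le_of_le_sum_Icc_one_comp_add_one (fun k hk => (hα k hk).2) hdiv
  obtain ⟨m, hm, rfl⟩ : ∃ m, 1 ≤ m ∧ n = N + 1 + m := ⟨n - (N + 1), by omega, by omega⟩
  have hα1 : ∀ k ∈ Ioc (N + 1) (N + 1 + m), α k ∈ Set.Icc 0 1 :=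
    fun k hk => hα k (by linarith [(mem_Ioc.1 hk).1])
  have hlog : Real.log (2 * P / ε) ≤ ∑ k ∈ Ioc (N + 1) (N + 1 + m), α k :=
    ((Nat.le_ceil _).trans (by exact_mod_cast le_max_left _ _)).trans
      (le_sum_Ioc_of_add_le_sum_Icc_one_comp_add_one hα hdiv hn)
  have hprod : ∏ k ∈ Ioc (N + 1) (N + 1 + m), (1 - α k) ≤ ε / (2 * P) := by
    simpa using prod_one_sub_le_inv_of_log_le_sum _ (fun k hk => (hα1 k hk).2) (by positivity) hlog
  have hprod0 : 0 ≤ ∏ k ∈ Ioc (N + 1) (N + 1 + m), (1 - α k) :=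
    prod_nonneg fun k hk => sub_nonneg.2 (hα1 k hk).2
  have hbsum : ∑ i ∈ Ico (N + 1) (N + 1 + m), b i ≤ ε / 2 := by
    rw [show N + 1 + m = N + m + 1 by omega, Ico_add_one_right_eq_Icc]
    exact hγmod _ (by positivity) m hm
  calc a (N + 1 + m)
      ≤ (∏ k ∈ Ioc (N + 1) (N + 1 + m), (1 - α k)) * a (N + 1)
          + ∑ i ∈ Ico (N + 1) (N + 1 + m), b i :=
        le_prod_mul_add_sum_of_le_mul_add
          (fun k hk => ⟨sub_nonneg.2 (hα k (by omega)).2, by linarith [(hα k (by omega)).1]⟩)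
          (fun i _ => hb i (by omega)) (fun k _ => hrec k (by omega)) m
    _ ≤ (∏ k ∈ Ioc (N + 1) (N + 1 + m), (1 - α k)) * P + ε / 2 := by
        gcongr
        exact haP _ (by omega)
    _ ≤ ε / (2 * P) * P + ε / 2 := by gcongr
    _ = ε := by field_simp; ring

/-- Quantitative lemma on sequences of nonnegative reals: an explicit rate of
convergence to zero for sequences satisfying `a_{n+1} ≤ (1 - α_{n+1}) a_n + b_n`. -/
theorem rate_of_convergence_main_lemma
    (α a b : ℕ → ℝ)
    (hα : ∀ n, 1 ≤ n → α n ∈ Set.Icc (0 : ℝ) 1)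
    (ha : ∀ n, 1 ≤ n → 0 ≤ a n) (hb : ∀ n, 1 ≤ n → 0 ≤ b n)
    (hrec : ∀ n, 1 ≤ n → a (n + 1) ≤ (1 - α (n + 1)) * a n + b n)
    (γ : ℝ → ℕ) (hγ : ∀ ε : ℝ, 0 < ε → 1 ≤ γ ε)
    (hγmod : ∀ ε : ℝ, 0 < ε → ∀ n : ℕ, 1 ≤ n →
      (∑ i ∈ Finset.Icc (γ ε + 1) (γ ε + n), b i) ≤ ε)
    (θ : ℕ → ℕ) (hθ : ∀ n : ℕ, 1 ≤ n → 1 ≤ θ n)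
    (hθdiv : ∀ n : ℕ, 1 ≤ n → (n : ℝ) ≤ ∑ k ∈ Finset.Icc 1 (θ n), α (k + 1))
    (P : ℝ) (hP : 0 < P) (haP : ∀ n, 1 ≤ n → a n ≤ P) :
    ∀ ε : ℝ, 0 < ε → ∀ n : ℕ,
      θ (γ (ε / 2) + max ⌈Real.log (2 * P / ε)⌉₊ 1) + 1 ≤ n → a n ≤ ε :=
  rate_of_convergence_main_lemma_general α a b hα hb hrec γ hγmod θ hθdiv P hP haP
end

section
/- For every real m with 0 < m < π/2 and every λ ∈ [0,1], one has 1 − sin((1 − λ)·m)/sin(m) ≥ λ·cos(m). -/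
/-!
Expanding `sin (m - λm)` gives `sin m - sin ((1 - λ) m) ≥ cos m · sin (λm)` as soon as `sin m ≥ 0`,
and concavity of `sin` on `[0, π]` together with `sin 0 = 0` gives `sin (λm) ≥ λ sin m`.
Since `cos m ≥ 0`, the two combine to `sin m - sin ((1 - λ) m) ≥ λ cos m sin m`; divide by `sin m > 0`.
-/

open Real

namespace Real

theorem mul_sin_le_sin_mul {x t : ℝ} (hx₀ : 0 ≤ x) (hxπ : x ≤ π) (ht₀ : 0 ≤ t) (ht₁ : t ≤ 1) :
    t * sin x ≤ sin (t * x) := by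
  simpa using strictConcaveOn_sin_Icc.concaveOn.2 ⟨le_rfl, pi_pos.le⟩ ⟨hx₀, hxπ⟩
    (sub_nonneg.2 ht₁) ht₀ (by ring)

theorem cos_mul_sin_le_sin_sub_sin_sub {x y : ℝ} (hx : 0 ≤ sin x) :
    cos x * sin y ≤ sin x - sin (x - y) := by
  have hy : 0 ≤ sin x * (1 - cos y) := mul_nonneg hx (sub_nonneg.2 (cos_le_one y))
  rw [sin_sub]
  linarith

end Real

/-- `μ = 1 - sin((1-λ)m)/sin m ≥ λ cos m` for `0 < m < π/2` and `λ ∈ [0,1]`. -/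
theorem one_sub_sin_ratio_ge_lambda_cos
    (m lam : ℝ) (hm0 : 0 < m) (hm : m < Real.pi / 2)
    (hlam : lam ∈ Set.Icc (0 : ℝ) 1) :
    1 - Real.sin ((1 - lam) * m) / Real.sin m ≥ lam * Real.cos m := by
  obtain ⟨hlam₀, hlam₁⟩ := hlam
  have hmπ : m ≤ π := hm.le.trans (half_le_self pi_pos.le)
  have hsin : 0 < sin m := sin_pos_of_pos_of_lt_pi hm0 (hm.trans (half_lt_self pi_pos))
  have hcos : 0 ≤ cos m := cos_nonneg_of_mem_Icc ⟨by linarith [pi_pos], hm.le⟩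
  have hdiff : cos m * sin (lam * m) ≤ sin m - sin ((1 - lam) * m) := by
    simpa only [sub_mul, one_mul] using cos_mul_sin_le_sin_sub_sin_sub (y := lam * m) hsin.le
  rw [ge_iff_le, one_sub_div hsin.ne', le_div_iff₀ hsin]
  calc lam * cos m * sin m = cos m * (lam * sin m) := by ring
    _ ≤ cos m * sin (lam * m) :=
      mul_le_mul_of_nonneg_left (mul_sin_le_sin_mul hm0.le hmπ hlam₀ hlam₁) hcos
    _ ≤ sin m - sin ((1 - lam) * m) := hdiff
end

section
/- Let κ > 0 and M > 0 with M·√κ < π/2, let (λ_n)_{n≥1} be a sequence in [0,1], and define μ_n = 1 − sin((1 − λ_n)·M√κ)/sin(M√κ) for n ≥ 1. If θ : ℤ₊ → ℤ₊ satisfies ∑_{k=1}^{θ(n)} λ_{k+1} ≥ n for all n ≥ 1, then ∑_{k=1}^{θ̃(n)} μ_{k+1} ≥ n for all n ≥ 1, where θ̃(n) = θ(⌈1/cos(M√κ)⌉·n). -/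
/-!
Writing `x = M√κ ∈ (0, π/2)` and expanding `sin((1-λ)x) = sin x cos(λx) - cos x sin(λx)`,
`μ = (1 - cos(λx)) + cos x · sin(λx) / sin x ≥ λ cos x`, because `sin(λx) ≥ λ sin x` by concavity
of `sin` on `[0, π]`. Hence `∑ μ_{k+1} ≥ cos x · ∑ λ_{k+1}`, and running `θ` up to
`⌈1/cos x⌉ n ≥ n / cos x` makes the right-hand side at least `n`.
-/

open Finset Real

def IsRateOfDivergence (c : ℕ → ℝ) (θ : ℕ → ℕ) : Prop :=
  ∀ n : ℕ, 1 ≤ n → (n : ℝ) ≤ ∑ k ∈ Icc 1 (θ n), c k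

theorem IsRateOfDivergence.of_mul_le {a b : ℕ → ℝ} {θ : ℕ → ℕ} {c : ℝ} (hc : 0 < c)
    (hab : ∀ k, c * b k ≤ a k) (hθ : IsRateOfDivergence b θ) :
    IsRateOfDivergence a (fun n ↦ θ (⌈1 / c⌉₊ * n)) := by
  intro n hn
  have hceil : 1 ≤ c * ⌈1 / c⌉₊ := by
    simpa [hc.ne'] using mul_le_mul_of_nonneg_left (Nat.le_ceil (1 / c)) hc.le
  have hm : 1 ≤ ⌈1 / c⌉₊ * n :=
    Nat.one_le_iff_ne_zero.2 (mul_ne_zero (by positivity) (by omega))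
  calc (n : ℝ) ≤ c * ↑(⌈1 / c⌉₊ * n) := by
        push_cast
        nlinarith [(Nat.one_le_cast (α := ℝ)).2 hn]
    _ ≤ c * ∑ k ∈ Icc 1 (θ (⌈1 / c⌉₊ * n)), b k := by gcongr; exact hθ _ hm
    _ ≤ ∑ k ∈ Icc 1 (θ (⌈1 / c⌉₊ * n)), a k := by
        rw [mul_sum]; exact sum_le_sum fun k _ ↦ hab k

theorem Real.mul_sin_le_sin_mul_s4 {a t : ℝ} (ha : 0 ≤ a) (ha' : a ≤ π) (ht : 0 ≤ t) (ht' : t ≤ 1) :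
    t * sin a ≤ sin (t * a) := by
  simpa using strictConcaveOn_sin_Icc.concaveOn.2 ⟨ha, ha'⟩ ⟨le_rfl, pi_pos.le⟩ ht
    (sub_nonneg.2 ht') (add_sub_cancel t 1)

theorem Real.mul_cos_le_one_sub_sin_div_sin {x t : ℝ} (hx : 0 < x) (hx' : x ≤ π / 2)
    (ht : 0 ≤ t) (ht' : t ≤ 1) :
    t * cos x ≤ 1 - sin ((1 - t) * x) / sin x := by
  have hsin : 0 < sin x := sin_pos_of_pos_of_lt_pi hx (by linarith [pi_pos])
  have hcos : 0 ≤ cos x := cos_nonneg_of_mem_Icc ⟨by linarith [pi_pos], hx'⟩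
  have hconc : t ≤ sin (t * x) / sin x :=
    (le_div_iff₀ hsin).2 (mul_sin_le_sin_mul_s4 hx.le (by linarith [pi_pos]) ht ht')
  have hexpand : 1 - sin ((1 - t) * x) / sin x
      = (1 - cos (t * x)) + cos x * (sin (t * x) / sin x) := by
    rw [show (1 - t) * x = x - t * x by ring, sin_sub]
    field_simp
    ring
  rw [hexpand]
  nlinarith [cos_le_one (t * x), mul_le_mul_of_nonneg_left hconc hcos]

/-- If `θ` is a rate of divergence for `∑ λ_{n+1}`, then
`θ̃(n) = θ(⌈1/cos(M√κ)⌉ n)` is a rate of divergence for `∑ μ_{n+1}`,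
where `μ_n = 1 - sin((1-λ_n)M√κ)/sin(M√κ)`. -/
theorem mu_rate_of_divergence
    (κ M : ℝ) (hκ : 0 < κ) (hM : 0 < M) (hMκ : M * Real.sqrt κ < Real.pi / 2)
    (lam : ℕ → ℝ) (hlam : ∀ n, 1 ≤ n → lam n ∈ Set.Icc (0 : ℝ) 1)
    (μ : ℕ → ℝ)
    (hμ : ∀ n, 1 ≤ n →
      μ n = 1 - Real.sin ((1 - lam n) * (M * Real.sqrt κ)) / Real.sin (M * Real.sqrt κ))
    (θ : ℕ → ℕ)
    (hθ : ∀ n : ℕ, 1 ≤ n → (n : ℝ) ≤ ∑ k ∈ Finset.Icc 1 (θ n), lam (k + 1)) :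
    ∀ n : ℕ, 1 ≤ n →
      (n : ℝ) ≤ ∑ k ∈ Finset.Icc 1 (θ (⌈1 / Real.cos (M * Real.sqrt κ)⌉₊ * n)), μ (k + 1) := by
  have hx : 0 < M * √κ := mul_pos hM (sqrt_pos.2 hκ)
  have hcos : 0 < cos (M * √κ) := cos_pos_of_mem_Ioo ⟨by linarith, hMκ⟩
  refine IsRateOfDivergence.of_mul_le (b := fun k ↦ lam (k + 1)) hcos (fun k ↦ ?_) hθ
  obtain ⟨hlam₀, hlam₁⟩ := hlam (k + 1) k.succ_pos
  rw [hμ (k + 1) k.succ_pos, mul_comm]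
  exact mul_cos_le_one_sub_sin_div_sin hx hMκ.le hlam₀ hlam₁
end

section
/- With the notation of the context, S2 − S3 − S4·cos(d(x,v)√κ) ≤ 2·S4·(sin²(d(x,v)√κ/2) − sin²(d(x,w)√κ/2)). -/
open Real

/-
Put a = d(x,w)√κ, b = d(w,y)√κ, c = d(x,z)√κ and e = d(x,v)√κ. Since w lies between x and y,
d(x,y)√κ = a + b, and expanding sin (a + b) shows that the right-hand side minus the left-hand side
is exactly sin a · sin c · (1 - cos b). This is nonnegative because a and c lie in [0, π].
-/

lemma sin_add_mul_sin_sub_eq (a b c e : ℝ) :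
    sin (a + b) * sin c - sin a * sin c - sin b * sin c * cos e =
      2 * (sin b * sin c) * (sin (e / 2) ^ 2 - sin (a / 2) ^ 2) - sin a * sin c * (1 - cos b) := by
  have half_sq : ∀ t : ℝ, sin (t / 2) ^ 2 = (1 - cos t) / 2 := fun t => by
    rw [sin_sq_eq_half_sub]; ring_nf
  rw [sin_add, half_sq, half_sq]
  ring

lemma sin_add_mul_sin_sub_le {a b c e : ℝ} (h : 0 ≤ sin a * sin c) :
    sin (a + b) * sin c - sin a * sin c - sin b * sin c * cos e ≤
      2 * (sin b * sin c) * (sin (e / 2) ^ 2 - sin (a / 2) ^ 2) := by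
  rw [sin_add_mul_sin_sub_eq]
  linarith [mul_nonneg h (sub_nonneg.mpr (cos_le_one b))]

lemma sin_mul_nonneg_of_le {r s M : ℝ} (hr : 0 ≤ r) (hs : 0 ≤ s) (hrM : r ≤ M)
    (hM : M * s ≤ π) : 0 ≤ sin (r * s) :=
  sin_nonneg_of_nonneg_of_le_pi (mul_nonneg hr hs)
    ((mul_le_mul_of_nonneg_right hrM hs).trans hM)

theorem geom_S2_sub_S3_sub_S4cos_le_general
    {X : Type*} [MetricSpace X] (κ M : ℝ)
    (hM : M * Real.sqrt κ < Real.pi / 2)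
    (x y z w v : X)
    (hbound : ∀ p ∈ ({x, y, z, w, v} : Set X), ∀ q ∈ ({x, y, z, w, v} : Set X),
      dist p q ≤ M)
    (hw : dist x w + dist w y = dist x y) :
    Real.sin (dist x y * Real.sqrt κ) * Real.sin (dist x z * Real.sqrt κ) -
    Real.sin (dist x w * Real.sqrt κ) * Real.sin (dist x z * Real.sqrt κ) -
    Real.sin (dist y w * Real.sqrt κ) * Real.sin (dist x z * Real.sqrt κ) *
      Real.cos (dist x v * Real.sqrt κ) ≤
    2 * (Real.sin (dist y w * Real.sqrt κ) * Real.sin (dist x z * Real.sqrt κ)) *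
      (Real.sin (dist x v * Real.sqrt κ / 2) ^ 2 - Real.sin (dist x w * Real.sqrt κ / 2) ^ 2) := by
  have hMπ : M * √κ ≤ π := by linarith [pi_pos]
  have sin_xw_nonneg : 0 ≤ sin (dist x w * √κ) :=
    sin_mul_nonneg_of_le dist_nonneg (sqrt_nonneg κ) (hbound x (by simp) w (by simp)) hMπ
  have sin_xz_nonneg : 0 ≤ sin (dist x z * √κ) :=
    sin_mul_nonneg_of_le dist_nonneg (sqrt_nonneg κ) (hbound x (by simp) z (by simp)) hMπ
  have dist_xy : dist x y * √κ = dist x w * √κ + dist y w * √κ := by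
    rw [dist_comm y w, ← add_mul, hw]
  rw [dist_xy]
  exact sin_add_mul_sin_sub_le (mul_nonneg sin_xw_nonneg sin_xz_nonneg)

/-- The inequality S2 − S3 − S4·cos(d(x,v)√κ) ≤ 2·S4·(sin²(d(x,v)√κ/2) − sin²(d(x,w)√κ/2)). -/
theorem geom_S2_sub_S3_sub_S4cos_le
    {X : Type*} [MetricSpace X] (κ M : ℝ) (hκ : 0 < κ)
    (hM0 : 0 < M * Real.sqrt κ) (hM : M * Real.sqrt κ < Real.pi / 2)
    (x y z w v : X)
    (hbound : ∀ p ∈ ({x, y, z, w, v} : Set X), ∀ q ∈ ({x, y, z, w, v} : Set X),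
      dist p q ≤ M)
    (hw : dist x w + dist w y = dist x y)
    (hv : dist x v + dist v z = dist x z) :
    Real.sin (dist x y * Real.sqrt κ) * Real.sin (dist x z * Real.sqrt κ) -
    Real.sin (dist x w * Real.sqrt κ) * Real.sin (dist x z * Real.sqrt κ) -
    Real.sin (dist y w * Real.sqrt κ) * Real.sin (dist x z * Real.sqrt κ) *
      Real.cos (dist x v * Real.sqrt κ) ≤
    2 * (Real.sin (dist y w * Real.sqrt κ) * Real.sin (dist x z * Real.sqrt κ)) *
      (Real.sin (dist x v * Real.sqrt κ / 2) ^ 2 - Real.sin (dist x w * Real.sqrt κ / 2) ^ 2) :=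
  geom_S2_sub_S3_sub_S4cos_le_general κ M hM x y z w v hbound hw
end

section
/- With the notation of the context, S3 − S1 − S5·cos(d(x,y)√κ) ≤ 2·S5·(sin²(d(x,y)√κ/2) − sin²(d(x,v)√κ/2)). -/
/-! Writing `d(x,z)√κ = c + e` with `c = d(x,v)√κ`, `e = d(z,v)√κ`, the right side minus the
left side is `sin(d(x,w)√κ) · sin c · (1 - cos e)`, nonnegative because both angles lie in `[0, π/2)`. -/

open Real

theorem Real.sin_half_sq (x : ℝ) : sin (x / 2) ^ 2 = (1 - cos x) / 2 := by
  rw [sin_sq, cos_sq, mul_div_cancel₀ x two_ne_zero]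
  ring

theorem Real.sin_add_sub_sin_sub_sin_mul_cos (c e t : ℝ) :
    sin (c + e) - sin c - sin e * cos t =
      2 * sin e * (sin (t / 2) ^ 2 - sin (c / 2) ^ 2) + sin c * (cos e - 1) := by
  rw [sin_add, sin_half_sq, sin_half_sq]
  ring

theorem Real.mul_sin_add_sub_le (a c e t : ℝ) (ha : 0 ≤ sin a) (hc : 0 ≤ sin c) :
    sin a * sin (c + e) - sin a * sin c - sin a * sin e * cos t ≤
      2 * (sin a * sin e) * (sin (t / 2) ^ 2 - sin (c / 2) ^ 2) := by
  have hdefect : sin a * (sin c * (cos e - 1)) ≤ 0 :=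
    mul_nonpos_of_nonneg_of_nonpos ha
      (mul_nonpos_of_nonneg_of_nonpos hc (sub_nonpos.mpr (cos_le_one e)))
  linear_combination sin a * sin_add_sub_sin_sub_sin_mul_cos c e t + hdefect

theorem geom_S3_sub_S1_sub_S5cos_le_general
    {X : Type*} [MetricSpace X] (κ M : ℝ)
    (hM : M * Real.sqrt κ < Real.pi / 2)
    (x y z w v : X)
    (hbound : ∀ p ∈ ({x, y, z, w, v} : Set X), ∀ q ∈ ({x, y, z, w, v} : Set X),
      dist p q ≤ M)
    (hv : dist x v + dist v z = dist x z) :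
    Real.sin (dist x w * Real.sqrt κ) * Real.sin (dist x z * Real.sqrt κ) -
    Real.sin (dist x w * Real.sqrt κ) * Real.sin (dist x v * Real.sqrt κ) -
    Real.sin (dist x w * Real.sqrt κ) * Real.sin (dist z v * Real.sqrt κ) *
      Real.cos (dist x y * Real.sqrt κ) ≤
    2 * (Real.sin (dist x w * Real.sqrt κ) * Real.sin (dist z v * Real.sqrt κ)) *
      (Real.sin (dist x y * Real.sqrt κ / 2) ^ 2 - Real.sin (dist x v * Real.sqrt κ / 2) ^ 2) := by
  have hsin : ∀ p ∈ ({x, y, z, w, v} : Set X), ∀ q ∈ ({x, y, z, w, v} : Set X),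
      0 ≤ sin (dist p q * √κ) := fun p hp q hq =>
    sin_nonneg_of_nonneg_of_le_pi (by positivity) (by
      nlinarith [mul_le_mul_of_nonneg_right (hbound p hp q hq) (sqrt_nonneg κ), pi_pos])
  have hz : dist x z * √κ = dist x v * √κ + dist z v * √κ := by
    rw [← hv, dist_comm z v, add_mul]
  rw [hz]
  exact mul_sin_add_sub_le _ _ _ _ (hsin x (by simp) w (by simp)) (hsin x (by simp) v (by simp))

/-- The inequality S3 − S1 − S5·cos(d(x,y)√κ) ≤ 2·S5·(sin²(d(x,y)√κ/2) − sin²(d(x,v)√κ/2)). -/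
theorem geom_S3_sub_S1_sub_S5cos_le
    {X : Type*} [MetricSpace X] (κ M : ℝ) (hκ : 0 < κ)
    (hM0 : 0 < M * Real.sqrt κ) (hM : M * Real.sqrt κ < Real.pi / 2)
    (x y z w v : X)
    (hbound : ∀ p ∈ ({x, y, z, w, v} : Set X), ∀ q ∈ ({x, y, z, w, v} : Set X),
      dist p q ≤ M)
    (hw : dist x w + dist w y = dist x y)
    (hv : dist x v + dist v z = dist x z) :
    Real.sin (dist x w * Real.sqrt κ) * Real.sin (dist x z * Real.sqrt κ) -
    Real.sin (dist x w * Real.sqrt κ) * Real.sin (dist x v * Real.sqrt κ) -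
    Real.sin (dist x w * Real.sqrt κ) * Real.sin (dist z v * Real.sqrt κ) *
      Real.cos (dist x y * Real.sqrt κ) ≤
    2 * (Real.sin (dist x w * Real.sqrt κ) * Real.sin (dist z v * Real.sqrt κ)) *
      (Real.sin (dist x y * Real.sqrt κ / 2) ^ 2 - Real.sin (dist x v * Real.sqrt κ / 2) ^ 2) :=
  geom_S3_sub_S1_sub_S5cos_le_general κ M hM x y z w v hbound hv
end

section
/- With the notation of the context, L1/(1 − L1) ≤ 1/(s·cos(M√κ)). -/
/-! With θ = d(x,z)√κ, the quotient is sin((1-s)θ) / (sin θ - sin((1-s)θ)). By the mean value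
theorem the denominator is at least sθ·cos θ ≥ sθ·cos(M√κ), while the numerator is at most θ. -/

open Real Set

namespace Real

theorem mul_cos_le_sin_sub_sin {a b : ℝ} (ha : 0 ≤ a) (hab : a ≤ b) (hb : b ≤ π) :
    (b - a) * cos b ≤ sin b - sin a := by
  have hderiv : ∀ t ∈ interior (Icc a b), cos b ≤ deriv sin t := by
    rw [interior_Icc]
    rintro t ⟨hat, htb⟩
    rw [deriv_sin]
    exact cos_le_cos_of_nonneg_of_le_pi (ha.trans hat.le) hb htb.le
  rw [mul_comm]
  exact (convex_Icc a b).mul_sub_le_image_sub_of_le_deriv continuous_sin.continuousOn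
    differentiable_sin.differentiableOn hderiv a (left_mem_Icc.2 hab) b (right_mem_Icc.2 hab) hab

theorem sin_mul_div_sin_sub_sin_mul_le {θ φ s : ℝ} (hθ0 : 0 < θ) (hθφ : θ ≤ φ) (hφ : φ < π / 2)
    (hs0 : 0 < s) (hs1 : s ≤ 1) :
    sin ((1 - s) * θ) / (sin θ - sin ((1 - s) * θ)) ≤ 1 / (s * cos φ) := by
  have hsθ : (1 - s) * θ ≤ θ := by nlinarith
  have hsθ0 : 0 ≤ (1 - s) * θ := by nlinarith
  have hgap : (θ - (1 - s) * θ) * cos θ ≤ sin θ - sin ((1 - s) * θ) :=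
    mul_cos_le_sin_sub_sin hsθ0 hsθ (by linarith [pi_pos])
  have hcosφ : 0 < cos φ := cos_pos_of_mem_Ioo ⟨by linarith [pi_pos], hφ⟩
  have hcos : cos φ ≤ cos θ := cos_le_cos_of_nonneg_of_le_pi hθ0.le (by linarith [pi_pos]) hθφ
  have hgap_pos : 0 < sin θ - sin ((1 - s) * θ) :=
    (mul_pos (by nlinarith) (hcosφ.trans_le hcos)).trans_le hgap
  rw [div_le_div_iff₀ hgap_pos (by positivity)]
  calc sin ((1 - s) * θ) * (s * cos φ) ≤ θ * (s * cos θ) := by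
        gcongr
        exact (sin_le hsθ0).trans hsθ
    _ = (θ - (1 - s) * θ) * cos θ := by ring
    _ ≤ 1 * (sin θ - sin ((1 - s) * θ)) := by linarith

end Real

theorem geom_L1_div_one_sub_L1_le_general
    {X : Type*} [MetricSpace X] (κ M : ℝ) (hκ : 0 < κ)
    (hM : M * Real.sqrt κ < Real.pi / 2)
    (x z v : X) (hxz : x ≠ z) (hxzM : dist x z ≤ M)
    (s : ℝ) (hs0 : 0 < s) (hs1 : s < 1)
    (hxv : dist x v = (1 - s) * dist x z) :
    (Real.sin (dist x v * Real.sqrt κ) / Real.sin (dist x z * Real.sqrt κ)) /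
      (1 - Real.sin (dist x v * Real.sqrt κ) / Real.sin (dist x z * Real.sqrt κ)) ≤
    1 / (s * Real.cos (M * Real.sqrt κ)) := by
  have hsqrt : 0 < √κ := sqrt_pos.2 hκ
  have hθ0 : 0 < dist x z * √κ := mul_pos (dist_pos.2 hxz) hsqrt
  have hθM : dist x z * √κ ≤ M * √κ := mul_le_mul_of_nonneg_right hxzM hsqrt.le
  have hsin : sin (dist x z * √κ) ≠ 0 :=
    (sin_pos_of_pos_of_lt_pi hθ0 (by linarith [hθM.trans_lt hM, pi_pos])).ne'
  rw [hxv, mul_assoc, one_sub_div hsin, div_div_div_cancel_right₀ hsin]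
  exact sin_mul_div_sin_sub_sin_mul_le hθ0 hθM hM hs0 hs1.le

/-- With `L1 = sin(d(x,v)√κ)/sin(d(x,z)√κ)`, one has
`L1/(1 - L1) ≤ 1/(s·cos(M√κ))`. -/
theorem geom_L1_div_one_sub_L1_le
    {X : Type*} [MetricSpace X] (κ M : ℝ) (hκ : 0 < κ)
    (hM0 : 0 < M * Real.sqrt κ) (hM : M * Real.sqrt κ < Real.pi / 2)
    (x z v : X) (hxz : x ≠ z) (hxzM : dist x z ≤ M)
    (s : ℝ) (hs0 : 0 < s) (hs1 : s < 1)
    (hxv : dist x v = (1 - s) * dist x z)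
    (hvz : dist v z = s * dist x z) :
    (Real.sin (dist x v * Real.sqrt κ) / Real.sin (dist x z * Real.sqrt κ)) /
      (1 - Real.sin (dist x v * Real.sqrt κ) / Real.sin (dist x z * Real.sqrt κ)) ≤
    1 / (s * Real.cos (M * Real.sqrt κ)) :=
  geom_L1_div_one_sub_L1_le_general κ M hκ hM x z v hxz hxzM s hs0 hs1 hxv
end

section
/- Let m, δ, a, b be reals with 0 < m < π/2, 0 < δ < 1, 0 ≤ a ≤ m, 0 ≤ b ≤ m and a ≤ b + δ, and let i, j ∈ ℕ. Then sin²( (i/(i+1))·a/2 ) ≤ sin²( (j/(j+1))·b/2 ) + sin²( m/(2(j+1)) ) + 2·sin( m/(2(j+1)) ) + sin²(δ/2) + 2·sin(δ/2)·sin(m/2). -/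
/-!
Subadditivity of `sin` on `[0, π/2]` does the work: `i/(i+1)·a/2 ≤ b/2 + δ/2` and
`b/2 ≤ j/(j+1)·b/2 + m/(2(j+1))`, with both right-hand sides at most `π/2` because `m < π/2` and
`δ < 1`. Squaring `p ≤ q + r` as `p² ≤ q² + r² + 2 r c` for a bound `c ≥ q` (namely `sin (m/2)`,
resp. `1`) and chaining the two estimates gives the claim.
-/

open Real

theorem Real.sin_add_le_sin_add_sin {x y : ℝ} (hx : 0 ≤ sin x) (hy : 0 ≤ sin y) :
    sin (x + y) ≤ sin x + sin y := by
  rw [sin_add]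
  nlinarith [cos_le_one x, cos_le_one y]

theorem Real.sin_le_sin_add_sin_of_le_add {x y z : ℝ} (hx : -(π / 2) ≤ x) (hy : 0 ≤ y)
    (hz : 0 ≤ z) (hxyz : x ≤ y + z) (hyz : y + z ≤ π / 2) : sin x ≤ sin y + sin z :=
  calc sin x ≤ sin (y + z) := sin_le_sin_of_le_of_le_pi_div_two hx hyz hxyz
    _ ≤ sin y + sin z :=
      sin_add_le_sin_add_sin (sin_nonneg_of_nonneg_of_le_pi hy (by linarith [pi_pos]))
        (sin_nonneg_of_nonneg_of_le_pi hz (by linarith [pi_pos]))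

theorem sq_le_sq_add_sq_add_two_mul_of_le_add {p q r c : ℝ} (hp : 0 ≤ p) (hr : 0 ≤ r)
    (hpqr : p ≤ q + r) (hqc : q ≤ c) : p ^ 2 ≤ q ^ 2 + r ^ 2 + 2 * r * c := by
  nlinarith [mul_le_mul_of_nonneg_left hqc hr]

theorem gamma_comparison_ineq_general
    (m δ a b : ℝ) (hm : m < Real.pi / 2)
    (hδ0 : 0 < δ) (hδ1 : δ < 1)
    (ha0 : 0 ≤ a) (hb0 : 0 ≤ b) (hbm : b ≤ m)
    (hab : a ≤ b + δ) (i j : ℕ) :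
    Real.sin ((i / (i + 1) : ℝ) * a / 2) ^ 2 ≤
      Real.sin ((j / (j + 1) : ℝ) * b / 2) ^ 2 +
      Real.sin (m / (2 * (j + 1))) ^ 2 + 2 * Real.sin (m / (2 * (j + 1))) +
      Real.sin (δ / 2) ^ 2 + 2 * Real.sin (δ / 2) * Real.sin (m / 2) := by
  have hpi : 3 < π := pi_gt_three
  set s := (i / (i + 1) : ℝ)
  set t := (j / (j + 1) : ℝ)
  have hs : 0 ≤ s ∧ s ≤ 1 := ⟨by positivity, div_le_one_of_le₀ (by linarith) (by positivity)⟩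
  have ht : 0 ≤ t ∧ t ≤ 1 := ⟨by positivity, div_le_one_of_le₀ (by linarith) (by positivity)⟩
  have hmj : m / (2 * (j + 1)) = (1 - t) * m / 2 := by
    simp only [t]; field_simp; ring
  have hleft : sin (s * a / 2) ≤ sin (b / 2) + sin (δ / 2) :=
    sin_le_sin_add_sin_of_le_add (by nlinarith) (by linarith) (by linarith) (by nlinarith)
      (by linarith)
  have hmid : sin (b / 2) ≤ sin (t * b / 2) + sin (m / (2 * (j + 1))) := by
    rw [hmj]
    exact sin_le_sin_add_sin_of_le_add (by linarith) (by nlinarith) (by nlinarith)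
      (by nlinarith) (by nlinarith)
  have h₁ := sq_le_sq_add_sq_add_two_mul_of_le_add
    (sin_nonneg_of_nonneg_of_le_pi (by nlinarith) (by nlinarith))
    (sin_nonneg_of_nonneg_of_le_pi (by linarith) (by linarith)) hleft
    (sin_le_sin_of_le_of_le_pi_div_two (by linarith) (by linarith) (by linarith : b / 2 ≤ m / 2))
  have h₂ := sq_le_sq_add_sq_add_two_mul_of_le_add
    (sin_nonneg_of_nonneg_of_le_pi (by linarith) (by linarith))
    (sin_nonneg_of_nonneg_of_le_pi (by rw [hmj]; nlinarith) (by rw [hmj]; nlinarith)) hmid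
    (sin_le_one _)
  linarith

/-- Real-number content of the lemma comparing `γ_n^i` and `γ_n^j`. -/
theorem gamma_comparison_ineq
    (m δ a b : ℝ) (hm0 : 0 < m) (hm : m < Real.pi / 2)
    (hδ0 : 0 < δ) (hδ1 : δ < 1)
    (ha0 : 0 ≤ a) (ham : a ≤ m) (hb0 : 0 ≤ b) (hbm : b ≤ m)
    (hab : a ≤ b + δ) (i j : ℕ) :
    Real.sin ((i / (i + 1) : ℝ) * a / 2) ^ 2 ≤
      Real.sin ((j / (j + 1) : ℝ) * b / 2) ^ 2 +
      Real.sin (m / (2 * (j + 1))) ^ 2 + 2 * Real.sin (m / (2 * (j + 1))) +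
      Real.sin (δ / 2) ^ 2 + 2 * Real.sin (δ / 2) * Real.sin (m / 2) :=
  gamma_comparison_ineq_general m δ a b hm hδ0 hδ1 ha0 hb0 hbm hab i j
end
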